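/- arXiv:1905.03847 — 6 statements merged into one kernel-verified Lean document; each statement's English description precedes it below -/
import Mathlib

section
/- Let C ∈ ℝⁿˣⁿ be a cost matrix, ε > 0, and Φ₀, Φ₁ ∈ ℝⁿ be strictly positive vectors with equal total mass. If M* is a minimizer over the set {M ∈ ℝ₊ⁿˣⁿ : M 1 = Φ₀, Mᵀ 1 = Φ₁} of the function M ↦ trace(Cᵀ M) + ε Σᵢⱼ (mᵢⱼ log mᵢⱼ − mᵢⱼ + 1), and M* has strictly positive entries, then there exist vectors u₀, u₁ ∈ ℝⁿ with strictly positive entries such that M* = diag(u₀) K diag(u₁), where K = exp(−C/ε) entrywise. -/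
/-! At a strictly positive minimizer `M` the objective is differentiable, with gradient
`Λ = C + ε log M` (entrywise). The cycle `D = E_ij - E_il + E_kl - E_kj` has zero row and
column sums, so `M + t D` stays feasible for small `|t|`, and first-order optimality along it gives
`Λ_ij + Λ_kl = Λ_il + Λ_kj`. Such a matrix splits as `Λ_ij = α_i + β_j`, and exponentiating
`ε log M_ij = α_i + β_j - C_ij` gives `M = diag(e^{α/ε}) exp(-C/ε) diag(e^{β/ε})`. -/

open Matrix

/-- Entropy term `𝒟(M) = ∑ᵢⱼ (mᵢⱼ log mᵢⱼ − mᵢⱼ + 1)`, with `0 log 0 = 0`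
(Mathlib's `Real.log 0 = 0` gives this convention). -/
noncomputable def entD {n : ℕ} (M : Matrix (Fin n) (Fin n) ℝ) : ℝ :=
  ∑ i, ∑ j, (M i j * Real.log (M i j) - M i j + 1)

open Filter Topology

lemma exists_add_of_add_eq_add {ι κ G : Type*} [AddCommGroup G] (Λ : ι → κ → G)
    (hΛ : ∀ i k j l, Λ i j + Λ k l = Λ i l + Λ k j) :
    ∃ (α : ι → G) (β : κ → G), ∀ i j, Λ i j = α i + β j := by
  rcases isEmpty_or_nonempty (ι × κ) with hempty | ⟨i₀, j₀⟩
  · exact ⟨0, 0, fun i j => (IsEmpty.false (i, j)).elim⟩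
  · refine ⟨fun i => Λ i j₀, fun j => Λ i₀ j - Λ i₀ j₀, fun i j => ?_⟩
    rw [← add_sub_assoc, eq_sub_iff_add_eq]
    exact hΛ i i₀ j j₀

namespace Matrix

variable {m n R : Type*} [Fintype m] [Fintype n]

lemma trace_transpose_mul_eq_sum [AddCommMonoid R] [Mul R] (A B : Matrix m n R) :
    trace (Aᵀ * B) = ∑ i, ∑ j, A i j * B i j := by
  simp only [trace, diag, mul_apply, transpose_apply]
  exact Finset.sum_comm

lemma trace_transpose_mul_single [NonUnitalNonAssocSemiring R] [DecidableEq m] [DecidableEq n]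
    (A : Matrix m n R) (i : m) (j : n) (c : R) :
    trace (Aᵀ * single i j c) = A i j * c := by
  simp [trace_mul_single]

variable [DecidableEq n]

lemma cycle_mulVec_one (i k j l : n) :
    (single i j (1 : ℝ) - single i l 1 + single k l 1 - single k j 1) *ᵥ 1 = 0 := by
  simp [sub_mulVec, add_mulVec, single_mulVec_eq]

lemma cycle_transpose_mulVec_one (i k j l : n) :
    (single i j (1 : ℝ) - single i l 1 + single k l 1 - single k j 1)ᵀ *ᵥ 1 = 0 := by
  simp [sub_mulVec, add_mulVec, single_mulVec_eq, transpose_single]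

end Matrix

lemma hasDerivAt_entD_add_smul {n : ℕ} {M : Matrix (Fin n) (Fin n) ℝ} (hM : ∀ i j, 0 < M i j)
    (D : Matrix (Fin n) (Fin n) ℝ) :
    HasDerivAt (fun t : ℝ => entD (M + t • D)) (trace ((M.map Real.log)ᵀ * D)) 0 := by
  rw [trace_transpose_mul_eq_sum]
  refine HasDerivAt.fun_sum fun i _ => HasDerivAt.fun_sum fun j _ => ?_
  have hline : HasDerivAt (fun t : ℝ => M i j + t * D i j) (D i j) 0 := by
    simpa using ((hasDerivAt_id (0 : ℝ)).mul_const (D i j)).const_add (M i j)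
  have hentropy : HasDerivAt (fun x => x * Real.log x - x + 1) (Real.log (M i j))
      (M i j + 0 * D i j) := by
    simpa using ((Real.hasDerivAt_mul_log (hM i j).ne').sub (hasDerivAt_id _)).add_const 1
  simpa [Function.comp_def, mul_comm] using hentropy.comp 0 hline

lemma hasDerivAt_trace_transpose_mul_add_smul {n : ℕ} (C M D : Matrix (Fin n) (Fin n) ℝ) :
    HasDerivAt (fun t : ℝ => trace (Cᵀ * (M + t • D))) (trace (Cᵀ * D)) 0 := by
  simp only [mul_add, mul_smul_comm, trace_add, trace_smul, smul_eq_mul]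
  simpa using ((hasDerivAt_id (0 : ℝ)).mul_const _).const_add (trace (Cᵀ * M))

lemma hasDerivAt_objective_add_smul {n : ℕ} (C : Matrix (Fin n) (Fin n) ℝ) (ε : ℝ)
    {M : Matrix (Fin n) (Fin n) ℝ} (hM : ∀ i j, 0 < M i j) (D : Matrix (Fin n) (Fin n) ℝ) :
    HasDerivAt (fun t : ℝ => trace (Cᵀ * (M + t • D)) + ε * entD (M + t • D))
      (trace ((C + ε • M.map Real.log)ᵀ * D)) 0 := by
  simpa [add_mul, trace_add] using (hasDerivAt_trace_transpose_mul_add_smul C M D).fun_add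
    ((hasDerivAt_entD_add_smul hM D).const_mul ε)

lemma trace_gradient_mul_eq_zero_of_isMinOn {n : ℕ} (C : Matrix (Fin n) (Fin n) ℝ) (ε : ℝ)
    {Φ₀ Φ₁ : Fin n → ℝ} {M : Matrix (Fin n) (Fin n) ℝ} (hpos : ∀ i j, 0 < M i j)
    (hrow : M *ᵥ 1 = Φ₀) (hcol : Mᵀ *ᵥ 1 = Φ₁)
    (hmin : ∀ N : Matrix (Fin n) (Fin n) ℝ, (∀ i j, 0 ≤ N i j) →
      N *ᵥ 1 = Φ₀ → Nᵀ *ᵥ 1 = Φ₁ →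
      trace (Cᵀ * M) + ε * entD M ≤ trace (Cᵀ * N) + ε * entD N)
    {D : Matrix (Fin n) (Fin n) ℝ} (hDrow : D *ᵥ 1 = 0) (hDcol : Dᵀ *ᵥ 1 = 0) :
    trace ((C + ε • M.map Real.log)ᵀ * D) = 0 := by
  refine IsLocalMin.hasDerivAt_eq_zero ?_ (hasDerivAt_objective_add_smul C ε hpos D)
  have hnonneg : ∀ᶠ t in 𝓝 (0 : ℝ), ∀ i j, 0 ≤ (M + t • D) i j := by
    refine eventually_all.2 fun i => eventually_all.2 fun j => ?_
    exact (continuousAt_const.eventually_lt (by fun_prop) (by simpa using hpos i j)).mono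
      fun t ht => ht.le
  filter_upwards [hnonneg] with t ht
  simpa using hmin _ ht (by simp [add_mulVec, smul_mulVec, hrow, hDrow])
    (by simp [add_mulVec, smul_mulVec, hcol, hDcol])

lemma exists_gradient_eq_add_of_isMinOn {n : ℕ} (C : Matrix (Fin n) (Fin n) ℝ) (ε : ℝ)
    {Φ₀ Φ₁ : Fin n → ℝ} {M : Matrix (Fin n) (Fin n) ℝ} (hpos : ∀ i j, 0 < M i j)
    (hrow : M *ᵥ 1 = Φ₀) (hcol : Mᵀ *ᵥ 1 = Φ₁)
    (hmin : ∀ N : Matrix (Fin n) (Fin n) ℝ, (∀ i j, 0 ≤ N i j) →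
      N *ᵥ 1 = Φ₀ → Nᵀ *ᵥ 1 = Φ₁ →
      trace (Cᵀ * M) + ε * entD M ≤ trace (Cᵀ * N) + ε * entD N) :
    ∃ α β : Fin n → ℝ, ∀ i j, C i j + ε * Real.log (M i j) = α i + β j := by
  refine exists_add_of_add_eq_add _ fun i k j l => ?_
  have h := trace_gradient_mul_eq_zero_of_isMinOn C ε hpos hrow hcol hmin
    (cycle_mulVec_one i k j l) (cycle_transpose_mulVec_one i k j l)
  simp only [mul_add, mul_sub, trace_add, trace_sub, trace_transpose_mul_single, mul_one] at h
  simp only [Matrix.add_apply, Matrix.smul_apply, map_apply, smul_eq_mul] at h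
  linear_combination h

theorem stmt1_general {n : ℕ} (C : Matrix (Fin n) (Fin n) ℝ) (ε : ℝ) (hε : 0 < ε)
    (Φ₀ Φ₁ : Fin n → ℝ)
    (M : Matrix (Fin n) (Fin n) ℝ)
    (hfeas : (∀ i j, 0 ≤ M i j) ∧ M.mulVec 1 = Φ₀ ∧ Mᵀ.mulVec 1 = Φ₁)
    (hmin : ∀ N : Matrix (Fin n) (Fin n) ℝ, (∀ i j, 0 ≤ N i j) →
      N.mulVec 1 = Φ₀ → Nᵀ.mulVec 1 = Φ₁ →
      Matrix.trace (Cᵀ * M) + ε * entD M ≤ Matrix.trace (Cᵀ * N) + ε * entD N)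
    (hpos : ∀ i j, 0 < M i j) :
    ∃ u₀ u₁ : Fin n → ℝ, (∀ i, 0 < u₀ i) ∧ (∀ i, 0 < u₁ i) ∧
      M = Matrix.diagonal u₀ * (Matrix.of fun i j => Real.exp (-C i j / ε))
            * Matrix.diagonal u₁ := by
  obtain ⟨-, hrow, hcol⟩ := hfeas
  obtain ⟨α, β, hαβ⟩ := exists_gradient_eq_add_of_isMinOn C ε hpos hrow hcol hmin
  refine ⟨fun i => Real.exp (α i / ε), fun j => Real.exp (β j / ε),
    fun _ => Real.exp_pos _, fun _ => Real.exp_pos _, ?_⟩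
  ext i j
  rw [mul_diagonal, diagonal_mul, of_apply, ← Real.exp_log (hpos i j), ← Real.exp_add,
    ← Real.exp_add]
  congr 1
  field_simp
  linarith [hαβ i j]

/-- a strictly positive minimizer of the entropy-regularized OMT problem has
the diagonal scaling form `M = diag(u₀) K diag(u₁)` with `K = exp(−C/ε)` entrywise. -/
theorem stmt1 {n : ℕ} (C : Matrix (Fin n) (Fin n) ℝ) (ε : ℝ) (hε : 0 < ε)
    (Φ₀ Φ₁ : Fin n → ℝ) (hΦ₀ : ∀ i, 0 < Φ₀ i) (hΦ₁ : ∀ i, 0 < Φ₁ i)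
    (hmass : ∑ i, Φ₀ i = ∑ i, Φ₁ i)
    (M : Matrix (Fin n) (Fin n) ℝ)
    (hfeas : (∀ i j, 0 ≤ M i j) ∧ M.mulVec 1 = Φ₀ ∧ Mᵀ.mulVec 1 = Φ₁)
    (hmin : ∀ N : Matrix (Fin n) (Fin n) ℝ, (∀ i j, 0 ≤ N i j) →
      N.mulVec 1 = Φ₀ → Nᵀ.mulVec 1 = Φ₁ →
      Matrix.trace (Cᵀ * M) + ε * entD M ≤ Matrix.trace (Cᵀ * N) + ε * entD N)
    (hpos : ∀ i j, 0 < M i j) :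
    ∃ u₀ u₁ : Fin n → ℝ, (∀ i, 0 < u₀ i) ∧ (∀ i, 0 < u₁ i) ∧
      M = Matrix.diagonal u₀ * (Matrix.of fun i j => Real.exp (-C i j / ε))
            * Matrix.diagonal u₁ :=
  stmt1_general C ε hε Φ₀ Φ₁ M hfeas hmin hpos
end

section
/- Let T ≥ 1, let K ∈ ℝⁿˣⁿ, and let the (T+1)-mode tensor K̂ ∈ ℝ^{n^{T+1}} have entries K̂_{i₀,…,i_T} = Π_{t=1}^{T} K_{i_{t−1}, i_t}. Let u₀,…,u_T ∈ ℝⁿ and U be the tensor with entries U_{i₀,…,i_T} = Π_{t=0}^{T} (u_t)_{i_t}. Then the projection of K̂ ⊙ U onto the t-th marginal, defined by P_t(M)_j = Σ_{i₀,…,i_{t−1},i_{t+1},…,i_T} M_{i₀,…,i_{t−1},j,i_{t+1},…,i_T}, equals the entrywise product of three vectors: (u₀ᵀ K diag(u₁) K ⋯ K diag(u_{t−1}) K)ᵀ, u_t, and K diag(u_{t+1}) K ⋯ K diag(u_{T−1}) K u_T. -/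
open Matrix

/-- Left factor: `leftVec K u t = (u₀ᵀ K diag(u₁) K ⋯ K diag(u_{t−1}) K)ᵀ`,
the all-ones vector for `t = 0`. -/
noncomputable def leftVec {n : ℕ} (K : Matrix (Fin n) (Fin n) ℝ) (u : ℕ → Fin n → ℝ) :
    ℕ → Fin n → ℝ
  | 0 => fun _ => 1
  | k + 1 => Kᵀ.mulVec fun i => u k i * leftVec K u k i

/-- Right factor (counting from the end): `rightAux K u T (T − t)` equals
`K diag(u_{t+1}) K ⋯ K diag(u_{T−1}) K u_T`, and is the all-ones vector for `t = T`. -/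
noncomputable def rightAux {n : ℕ} (K : Matrix (Fin n) (Fin n) ℝ) (u : ℕ → Fin n → ℝ)
    (T : ℕ) : ℕ → Fin n → ℝ
  | 0 => fun _ => 1
  | m + 1 => K.mulVec fun i => u (T - m) i * rightAux K u T m i

/-!
Split a path `i₀, …, i_T` at its first index. Summing out `i₀` either fixes the left boundary
(`t = 0`, where the remaining sum is a product `K (u₁ ⊙ ⋯)` producing the right factor) or
absorbs `u₀` into the next weight, `u₁ ↦ u₁ ⊙ Kᵀ u₀`; the latter leaves a chain of length
`T - 1` whose left and right factors are those of the original chain shifted by one step, so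
induction on `T` closes the argument.
-/

open Finset

section ChainWeight

variable {ι R : Type*} [CommMonoid R]

/-- The entry `(K̂ ⊙ U)_{i₀,…,i_T}` of the paper, for the path `i`. -/
def chainWeight {T : ℕ} (K : Matrix ι ι R) (u : ℕ → ι → R) (i : Fin (T + 1) → ι) : R :=
  (∏ s : Fin T, K (i s.castSucc) (i s.succ)) * ∏ s : Fin (T + 1), u s (i s)

lemma chainWeight_cons {T : ℕ} (K : Matrix ι ι R) (u : ℕ → ι → R) (x : ι) (i : Fin (T + 1) → ι) :
    chainWeight K u (Fin.cons x i : Fin (T + 2) → ι) =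
      u 0 x * K x (i 0) * chainWeight K (fun s => u (s + 1)) i := by
  simp only [chainWeight, Fin.prod_univ_succ (n := T + 1), Fin.prod_univ_succ (n := T),
    Fin.cons_zero, Fin.cons_succ, Fin.castSucc_zero, ← Fin.succ_castSucc, Fin.val_zero,
    Fin.val_succ]
  ac_rfl

lemma chainWeight_update_zero {T : ℕ} (K : Matrix ι ι R) (u : ℕ → ι → R) (a : ι → R)
    (i : Fin (T + 1) → ι) :
    chainWeight K (Function.update u 0 (a * u 0)) i = a (i 0) * chainWeight K u i := by
  simp only [chainWeight, Fin.prod_univ_succ (n := T), Fin.val_zero, Function.update_self,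
    Fin.val_succ, Function.update_of_ne (Nat.succ_ne_zero _), Pi.mul_apply]
  ac_rfl

end ChainWeight

lemma sum_fun_fin_succ {α M : Type*} [Fintype α] [AddCommMonoid M] {T : ℕ}
    (f : (Fin (T + 1) → α) → M) :
    ∑ i, f i = ∑ x, ∑ i : Fin T → α, f (Fin.cons x i) := by
  rw [← (Fin.consEquiv fun _ => α).sum_comp, Fintype.sum_prod_type]
  rfl

lemma sum_mul_eq_sum_mul_sum_fiber {α β R : Type*} [Fintype α] [Fintype β] [DecidableEq β]
    [NonUnitalNonAssocSemiring R] (g : α → β) (f : β → R) (w : α → R) :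
    ∑ a, f (g a) * w a = ∑ b, f b * ∑ a, if g a = b then w a else 0 := by
  simp_rw [mul_sum, mul_ite, mul_zero]
  rw [sum_comm]
  simp

section Marginal

variable {n : ℕ} (K : Matrix (Fin n) (Fin n) ℝ)

lemma rightAux_shift {u u' : ℕ → Fin n → ℝ} (h : ∀ s, 1 ≤ s → u' s = u (s + 1)) {T m : ℕ}
    (hm : m ≤ T) : rightAux K u' T m = rightAux K u (T + 1) m := by
  induction m with
  | zero => rfl
  | succ m ih =>
    simp only [rightAux, h (T - m) (by omega), ih (by omega), show T - m + 1 = T + 1 - m by omega]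

lemma leftVec_shift {u u' : ℕ → Fin n → ℝ} (h0 : u' 0 = leftVec K u 1 * u 1)
    (h : ∀ s, 1 ≤ s → u' s = u (s + 1)) (k : ℕ) :
    u' k * leftVec K u' k = u (k + 1) * leftVec K u (k + 1) := by
  induction k with
  | zero => ext; simp [h0, leftVec, mul_comm]
  | succ k ih =>
    have hleft : leftVec K u' (k + 1) = leftVec K u (k + 2) := congrArg (Kᵀ *ᵥ ·) ih
    rw [hleft, h (k + 1) (by omega)]

lemma leftVec_one_apply (u : ℕ → Fin n → ℝ) (y : Fin n) :
    leftVec K u 1 y = ∑ x, u 0 x * K x y := by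
  simp [leftVec, mulVec, dotProduct, mul_comm]

theorem sum_fiber_chainWeight_eq (T : ℕ) (u : ℕ → Fin n → ℝ) (t : Fin (T + 1)) (j : Fin n) :
    ∑ i : Fin (T + 1) → Fin n, (if i t = j then chainWeight K u i else 0) =
      leftVec K u t j * u t j * rightAux K u T (T - t) j := by
  induction T generalizing u j with
  | zero =>
    obtain rfl : t = 0 := Subsingleton.elim (α := Fin 1) t 0
    rw [← (Equiv.funUnique (Fin 1) (Fin n)).symm.sum_comp]
    simp [chainWeight, leftVec, rightAux]
  | succ T ih =>
    rw [sum_fun_fin_succ]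
    cases t using Fin.cases with
    | zero =>
      have htail : ∀ y, ∑ i : Fin (T + 1) → Fin n,
          (if i 0 = y then chainWeight K (fun s => u (s + 1)) i else 0) =
            u 1 y * rightAux K u (T + 1) T y := by
        intro y
        rw [ih, Fin.val_zero, Nat.sub_zero, rightAux_shift K (fun _ _ => rfl) le_rfl]
        simp [leftVec]
      simp only [Fin.cons_zero, chainWeight_cons, sum_ite_irrel, sum_const_zero, sum_ite_eq',
        mem_univ, if_true, mul_assoc, ← mul_sum]
      rw [sum_mul_eq_sum_mul_sum_fiber (fun i : Fin (T + 1) → Fin n => i 0) (fun y => K j y)]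
      simp [htail, leftVec, rightAux, show T + 1 - T = 1 by omega, mulVec, dotProduct]
    | succ t =>
      -- summing out `i₀` turns `u₁` into `u₁ ⊙ Kᵀ u₀`, a chain one step shorter
      set u' := Function.update (fun s => u (s + 1)) 0 (leftVec K u 1 * u 1)
      have hu' : ∀ s, 1 ≤ s → u' s = u (s + 1) := fun s hs =>
        Function.update_of_ne (by omega) _ _
      have hhead : ∀ i : Fin (T + 1) → Fin n,
          ∑ x, u 0 x * K x (i 0) * chainWeight K (fun s => u (s + 1)) i = chainWeight K u' i := by
        intro i
        rw [← sum_mul, ← leftVec_one_apply, chainWeight_update_zero]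
      simp only [Fin.cons_succ, chainWeight_cons]
      rw [sum_comm]
      simp only [sum_ite_irrel, sum_const_zero, hhead, ih, Fin.val_succ,
        show T + 1 - (t + 1) = T - t by omega, rightAux_shift K hu' (Nat.sub_le T t)]
      have hleft := congrFun (leftVec_shift K rfl hu' t) j
      simp only [Pi.mul_apply] at hleft
      rw [mul_comm (leftVec K u' t j), hleft, mul_comm (u (t + 1) j)]

end Marginal

theorem stmt5_general {n T : ℕ} (K : Matrix (Fin n) (Fin n) ℝ)
    (u : ℕ → Fin n → ℝ) (t : Fin (T + 1)) (j : Fin n) :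
    (∑ i : Fin (T + 1) → Fin n,
        if i t = j then
          (∏ s : Fin T, K (i s.castSucc) (i s.succ)) * ∏ s : Fin (T + 1), u s.val (i s)
        else 0)
      = leftVec K u t.val j * u t.val j * rightAux K u T (T - t.val) j :=
  sum_fiber_chainWeight_eq K T u t j

/-- marginal projection of the sequentially structured tensor
`K̂ ⊙ U`, where `K̂_{i₀,…,i_T} = ∏_{t=1}^T K_{i_{t−1} i_t}` and
`U_{i₀,…,i_T} = ∏_t (u_t)_{i_t}`, equals the entrywise product of the left chain,
`u_t`, and the right chain. -/
theorem stmt5 {n T : ℕ} (hT : 1 ≤ T) (K : Matrix (Fin n) (Fin n) ℝ)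
    (u : ℕ → Fin n → ℝ) (t : Fin (T + 1)) (j : Fin n) :
    (∑ i : Fin (T + 1) → Fin n,
        if i t = j then
          (∏ s : Fin T, K (i s.castSucc) (i s.succ)) * ∏ s : Fin (T + 1), u s.val (i s)
        else 0)
      = leftVec K u t.val j * u t.val j * rightAux K u T (T - t.val) j :=
  stmt5_general K u t j
end

section
/- Let T ≥ 1, let K ∈ ℝⁿˣⁿ, and let K̂ be the tensor with entries K̂_{i₀,…,i_T} = Π_{t=1}^{T} K_{i_{t−1}, i_t}. Let U = u₀ ⊗ ⋯ ⊗ u_T. Then for 0 ≤ t₁ < t₂ ≤ T, the bi-marginal projection P_{t₁,t₂}(K̂ ⊙ U) ∈ ℝⁿˣⁿ, defined by summing over all indices except i_{t₁} and i_{t₂}, equals diag(u₀ᵀ K diag(u₁) ⋯ K diag(u_{t₁−1}) K) · diag(u_{t₁}) K diag(u_{t₁+1}) ⋯ K diag(u_{t₂−1}) K diag(u_{t₂}) · diag(K diag(u_{t₂+1}) ⋯ K diag(u_{T−1}) K u_T), where the left and right diagonal matrices are built from the indicated vectors. -/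
open Matrix

/-- Middle matrix: `midMat K u a m = diag(u_a) K diag(u_{a+1}) ⋯ K diag(u_{a+m})`. -/
noncomputable def midMat {n : ℕ} (K : Matrix (Fin n) (Fin n) ℝ) (u : ℕ → Fin n → ℝ)
    (a : ℕ) : ℕ → Matrix (Fin n) (Fin n) ℝ
  | 0 => Matrix.diagonal (u a)
  | m + 1 => midMat K u a m * K * Matrix.diagonal (u (a + m + 1))

/- ------------------- auxiliary machinery ------------------- -/

noncomputable def prodMat {n : ℕ} (f : ℕ → Matrix (Fin n) (Fin n) ℝ) :
    ℕ → Matrix (Fin n) (Fin n) ℝ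
  | 0 => 1
  | m + 1 => prodMat f m * f m

lemma prodMat_congr {n : ℕ} {f g : ℕ → Matrix (Fin n) (Fin n) ℝ} {m : ℕ}
    (h : ∀ s, s < m → f s = g s) : prodMat f m = prodMat g m := by
  induction m with
  | zero => rfl
  | succ m IH =>
    simp only [prodMat]
    rw [IH fun s hs => h s (by omega), h m (by omega)]

lemma prodMat_add {n : ℕ} (f : ℕ → Matrix (Fin n) (Fin n) ℝ) (a b : ℕ) :
    prodMat f (a + b) = prodMat f a * prodMat (fun s => f (a + s)) b := by
  induction b with
  | zero => simp [prodMat]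
  | succ b IH =>
    rw [show a + (b + 1) = (a + b) + 1 from rfl]
    simp only [prodMat]
    rw [IH, Matrix.mul_assoc]

lemma prodMat_add' {n : ℕ} (f g : ℕ → Matrix (Fin n) (Fin n) ℝ) (a b : ℕ)
    (hg : ∀ s, s < b → g s = f (a + s)) :
    prodMat f (a + b) = prodMat f a * prodMat g b := by
  rw [prodMat_add]
  congr 1
  exact prodMat_congr fun s hs => (hg s hs).symm

lemma prodMat_cons {n : ℕ} (f : ℕ → Matrix (Fin n) (Fin n) ℝ) (m : ℕ) :
    prodMat f (m + 1) = f 0 * prodMat (fun s => f (s + 1)) m := by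
  have h := prodMat_add f 1 m
  rw [show (1 : ℕ) + m = m + 1 from by omega] at h
  rw [h, show prodMat f 1 = f 0 from by simp [prodMat]]
  congr 1
  exact prodMat_congr fun s _ => by
    show f (1 + s) = f (s + 1)
    rw [Nat.add_comm]

lemma prodMat_cons' {n : ℕ} (f g : ℕ → Matrix (Fin n) (Fin n) ℝ)
    (A : Matrix (Fin n) (Fin n) ℝ) (m : ℕ)
    (hg : ∀ s, s < m → g s = f (s + 1)) (hA : A = f 0) :
    prodMat f (m + 1) = A * prodMat g m := by
  rw [prodMat_cons, hA]
  congr 1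
  exact prodMat_congr fun s hs => (hg s hs).symm

lemma shuttle {n : ℕ} (A : Matrix (Fin n) (Fin n) ℝ) (B : ℕ → Matrix (Fin n) (Fin n) ℝ)
    (m : ℕ) :
    A * prodMat (fun s => B s * A) m = prodMat (fun s => A * B s) m * A := by
  induction m with
  | zero => simp [prodMat]
  | succ m IH =>
    simp only [prodMat]
    rw [← Matrix.mul_assoc, IH]
    simp [Matrix.mul_assoc]

lemma mulVec_apply {n : ℕ} (M : Matrix (Fin n) (Fin n) ℝ) (v : Fin n → ℝ) (a : Fin n) :
    (M.mulVec v) a = ∑ b, M a b * v b := rfl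

lemma diag_mulVec {n : ℕ} (v x : Fin n → ℝ) :
    (Matrix.diagonal v).mulVec x = fun b => v b * x b := by
  funext b
  simp [mulVec_apply, Matrix.diagonal_apply, ite_mul, zero_mul, Finset.sum_ite_eq]

lemma mulVec_delta' {n : ℕ} (M : Matrix (Fin n) (Fin n) ℝ) (c : Fin n) (a : Fin n) :
    (M.mulVec fun b => if b = c then (1:ℝ) else 0) a = M a c := by
  simp [mulVec_apply, mul_ite, mul_one, mul_zero, Finset.sum_ite_eq']

lemma sand2 {n : ℕ} (X Y : Matrix (Fin n) (Fin n) ℝ) (c : Fin n) (a b : Fin n) :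
    (X * (Matrix.diagonal (fun x => if x = c then (1:ℝ) else 0) * Y)) a b
      = X a c * Y c b := by
  rw [Matrix.mul_apply]
  have h : ∀ x, (Matrix.diagonal (fun x => if x = c then (1:ℝ) else 0) * Y) x b
      = if x = c then Y c b else 0 := by
    intro x
    rw [Matrix.diagonal_mul]
    by_cases hx : x = c <;> simp [hx]
  simp only [h, mul_ite, mul_zero]
  rw [Finset.sum_ite_eq']
  simp

def snocE (n m : ℕ) : ((Fin (m + 1) → Fin n) × Fin n) ≃ (Fin (m + 2) → Fin n) where
  toFun q := Fin.snoc q.1 q.2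
  invFun i := (Fin.init i, i (Fin.last (m + 1)))
  left_inv := by
    rintro ⟨p, x⟩
    simp [Fin.init_snoc]
  right_inv := fun i => Fin.snoc_init_self i

lemma chain' {n : ℕ} (K : Matrix (Fin n) (Fin n) ℝ) (v : ℕ → Fin n → ℝ) :
    ∀ (m : ℕ) (ψ : Fin n → ℝ),
      (∑ i : Fin (m + 1) → Fin n,
        ((∏ s : Fin m, K (i s.castSucc) (i s.succ)) * ∏ s : Fin (m + 1), v s.val (i s)) *
          ψ (i (Fin.last m)))
      = ∑ a, ((prodMat (fun s => Matrix.diagonal (v s) * K) m).mulVec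
          (fun b => v m b * ψ b)) a := by
  intro m
  induction m with
  | zero =>
    intro ψ
    rw [← Equiv.sum_comp (Equiv.funUnique (Fin 1) (Fin n)).symm]
    simp [prodMat, Matrix.one_mulVec, Equiv.funUnique]
  | succ m IH =>
    intro ψ
    rw [← Equiv.sum_comp (snocE n m)]
    rw [Fintype.sum_prod_type]
    trans (∑ p : Fin (m + 1) → Fin n, ∑ x : Fin n,
      (((∏ s : Fin m, K (p s.castSucc) (p s.succ)) * K (p (Fin.last m)) x) *
        ((∏ s : Fin (m + 1), v s.val (p s)) * v (m + 1) x)) * ψ x)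
    · refine Finset.sum_congr rfl fun p _ => Finset.sum_congr rfl fun x _ => ?_
      simp only [snocE, Equiv.coe_fn_mk]
      rw [Fin.prod_univ_castSucc, Fin.prod_univ_castSucc]
      simp only [Fin.succ_castSucc, Fin.snoc_castSucc, Fin.snoc_last, Fin.succ_last,
        Fin.coe_castSucc, Fin.val_last]
    trans (∑ p : Fin (m + 1) → Fin n,
      ((∏ s : Fin m, K (p s.castSucc) (p s.succ)) * ∏ s : Fin (m + 1), v s.val (p s)) *
        ((K.mulVec fun b => v (m + 1) b * ψ b) (p (Fin.last m))))
    · refine Finset.sum_congr rfl fun p _ => ?_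
      rw [mulVec_apply, Finset.mul_sum]
      exact Finset.sum_congr rfl fun x _ => by ring
    · rw [IH]
      have h : (prodMat (fun s => Matrix.diagonal (v s) * K) (m + 1)).mulVec
            (fun b => v (m + 1) b * ψ b)
          = (prodMat (fun s => Matrix.diagonal (v s) * K) m).mulVec
            (fun b => v m b * (K.mulVec fun c => v (m + 1) c * ψ c) b) := by
        rw [show prodMat (fun s => Matrix.diagonal (v s) * K) (m + 1)
            = prodMat (fun s => Matrix.diagonal (v s) * K) m * (Matrix.diagonal (v m) * K)
            from rfl]
        rw [← Matrix.mulVec_mulVec, ← Matrix.mulVec_mulVec, diag_mulVec]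
      rw [h]

lemma leftVec_eq {n : ℕ} (K : Matrix (Fin n) (Fin n) ℝ) (u : ℕ → Fin n → ℝ) :
    ∀ (t : ℕ) (j : Fin n),
      leftVec K u t j = ∑ a, prodMat (fun s => Matrix.diagonal (u s) * K) t a j := by
  intro t
  induction t with
  | zero =>
    intro j
    simp [leftVec, prodMat, Matrix.one_apply, Finset.sum_ite_eq']
  | succ t IH =>
    intro j
    simp only [leftVec]
    rw [mulVec_apply]
    simp only [Matrix.transpose_apply, prodMat, Matrix.mul_apply, Matrix.diagonal_mul]
    rw [Finset.sum_comm]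
    refine Finset.sum_congr rfl fun b _ => ?_
    rw [IH b, Finset.mul_sum, Finset.mul_sum]
    refine Finset.sum_congr rfl fun a _ => ?_
    rw [show (∑ x, Matrix.diagonal (u t) b x * K x j) = u t b * K b j from by
      simp [Matrix.diagonal_apply, ite_mul, zero_mul, Finset.sum_ite_eq]]
    ring

lemma rightAux_eq {n : ℕ} (K : Matrix (Fin n) (Fin n) ℝ) (u : ℕ → Fin n → ℝ) (T : ℕ) :
    ∀ (m : ℕ), m ≤ T →
      rightAux K u T m
        = (prodMat (fun s => K * Matrix.diagonal (u (T - m + s + 1))) m).mulVec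
            (fun _ => (1:ℝ)) := by
  intro m
  induction m with
  | zero =>
    intro _
    funext a
    simp [rightAux, prodMat, Matrix.one_mulVec]
  | succ m IH =>
    intro h
    rw [show rightAux K u T (m + 1) = K.mulVec (fun i => u (T - m) i * rightAux K u T m i)
      from rfl]
    rw [IH (by omega)]
    rw [prodMat_cons' (fun s => K * Matrix.diagonal (u (T - (m + 1) + s + 1)))
      (fun s => K * Matrix.diagonal (u (T - m + s + 1)))
      (K * Matrix.diagonal (u (T - m))) m
      (fun s _ => by
        show K * Matrix.diagonal (u (T - m + s + 1))
            = K * Matrix.diagonal (u (T - (m + 1) + (s + 1) + 1))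
        rw [show T - (m + 1) + (s + 1) + 1 = T - m + s + 1 from by omega])
      (by
        show K * Matrix.diagonal (u (T - m)) = K * Matrix.diagonal (u (T - (m + 1) + 0 + 1))
        rw [show T - (m + 1) + 0 + 1 = T - m from by omega])]
    rw [Matrix.mul_assoc, ← Matrix.mulVec_mulVec, ← Matrix.mulVec_mulVec, diag_mulVec]

lemma midMat_eq {n : ℕ} (K : Matrix (Fin n) (Fin n) ℝ) (u : ℕ → Fin n → ℝ) (a : ℕ) :
    ∀ (m : ℕ), midMat K u a m
      = prodMat (fun s => Matrix.diagonal (u (a + s)) * K) m * Matrix.diagonal (u (a + m)) := by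
  intro m
  induction m with
  | zero => simp [midMat, prodMat]
  | succ m IH =>
    rw [show midMat K u a (m + 1) = midMat K u a m * K * Matrix.diagonal (u (a + m + 1))
      from rfl, IH]
    rw [show prodMat (fun s => Matrix.diagonal (u (a + s)) * K) (m + 1)
        = prodMat (fun s => Matrix.diagonal (u (a + s)) * K) m * (Matrix.diagonal (u (a + m)) * K)
      from rfl]
    rw [show a + (m + 1) = a + m + 1 from rfl]
    simp [Matrix.mul_assoc]

/-- bi-marginal projection of the sequential tensor `K̂ ⊙ U` onto modes
`t₁ < t₂` equals `diag(left) ⬝ (diag(u_{t₁}) K ⋯ K diag(u_{t₂})) ⬝ diag(right)`. -/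
theorem stmt6 {n T : ℕ} (hT : 1 ≤ T) (K : Matrix (Fin n) (Fin n) ℝ)
    (u : ℕ → Fin n → ℝ) (t₁ t₂ : Fin (T + 1)) (h12 : t₁ < t₂) (j ℓ : Fin n) :
    (∑ i : Fin (T + 1) → Fin n,
        if i t₁ = j ∧ i t₂ = ℓ then
          (∏ s : Fin T, K (i s.castSucc) (i s.succ)) * ∏ s : Fin (T + 1), u s.val (i s)
        else 0)
      = leftVec K u t₁.val j * midMat K u t₁.val (t₂.val - t₁.val) j ℓ
          * rightAux K u T (T - t₂.val) ℓ := by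
  classical
  have hv : (t₁ : ℕ) < (t₂ : ℕ) := h12
  have hle : (t₂ : ℕ) ≤ T := Nat.lt_succ_iff.mp t₂.isLt
  obtain ⟨k₁, hk₁⟩ : ∃ k, (t₂ : ℕ) = (t₁ : ℕ) + (k + 1) := ⟨(t₂ : ℕ) - (t₁ : ℕ) - 1, by omega⟩
  obtain ⟨d₂, hd₂⟩ : ∃ d, T = (t₂ : ℕ) + d := ⟨T - (t₂ : ℕ), by omega⟩
  set w : ℕ → Fin n → ℝ := fun s a =>
    (if s = (t₁ : ℕ) then (if a = j then (1:ℝ) else 0) else 1) *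
      ((if s = (t₂ : ℕ) then (if a = ℓ then (1:ℝ) else 0) else 1) * u s a) with hwdef
  have step1 : (∑ i : Fin (T + 1) → Fin n,
        if i t₁ = j ∧ i t₂ = ℓ then
          (∏ s : Fin T, K (i s.castSucc) (i s.succ)) * ∏ s : Fin (T + 1), u s.val (i s)
        else 0)
      = ∑ i : Fin (T + 1) → Fin n,
          ((∏ s : Fin T, K (i s.castSucc) (i s.succ)) * ∏ s : Fin (T + 1), w s.val (i s)) *
            (fun _ => (1:ℝ)) (i (Fin.last T)) := by
    refine Finset.sum_congr rfl fun i _ => ?_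
    have hA : (∏ s : Fin (T + 1),
          (if (s : ℕ) = (t₁ : ℕ) then (if i s = j then (1:ℝ) else 0) else 1))
        = (if i t₁ = j then (1:ℝ) else 0) := by
      rw [Finset.prod_eq_single t₁
        (fun s _ hs => by
          have hsv : (s : ℕ) ≠ (t₁ : ℕ) := fun hh => hs (Fin.val_injective hh)
          simp [hsv])
        (fun h => absurd (Finset.mem_univ t₁) h)]
      simp
    have hB : (∏ s : Fin (T + 1),
          (if (s : ℕ) = (t₂ : ℕ) then (if i s = ℓ then (1:ℝ) else 0) else 1))
        = (if i t₂ = ℓ then (1:ℝ) else 0) := by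
      rw [Finset.prod_eq_single t₂
        (fun s _ hs => by
          have hsv : (s : ℕ) ≠ (t₂ : ℕ) := fun hh => hs (Fin.val_injective hh)
          simp [hsv])
        (fun h => absurd (Finset.mem_univ t₂) h)]
      simp
    have hW : (∏ s : Fin (T + 1), w s.val (i s))
        = (if i t₁ = j then (1:ℝ) else 0) *
            ((if i t₂ = ℓ then (1:ℝ) else 0) * ∏ s : Fin (T + 1), u s.val (i s)) := by
      simp only [hwdef]
      rw [Finset.prod_mul_distrib, Finset.prod_mul_distrib, hA, hB]
    by_cases h1 : i t₁ = j <;> by_cases h2 : i t₂ = ℓ <;> simp [hW, h1, h2]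
  refine (step1.trans (chain' K w T fun _ => (1:ℝ))).trans ?_
  have hsplit : prodMat (fun s => Matrix.diagonal (w s) * K) T
      = prodMat (fun s => Matrix.diagonal (u s) * K) (t₁ : ℕ) *
        ((Matrix.diagonal (fun x => if x = j then (1:ℝ) else 0) *
            prodMat (fun s => Matrix.diagonal (u ((t₁ : ℕ) + s)) * K) (k₁ + 1)) *
          prodMat (fun s => Matrix.diagonal (w ((t₂ : ℕ) + s)) * K) d₂) := by
    rw [congrArg (prodMat fun s => Matrix.diagonal (w s) * K)
      (show T = (t₁ : ℕ) + (k₁ + 1 + d₂) by omega)]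
    rw [prodMat_add' (fun s => Matrix.diagonal (w s) * K)
      (fun s => Matrix.diagonal (w ((t₁ : ℕ) + s)) * K) (t₁ : ℕ) (k₁ + 1 + d₂)
      (fun s _ => rfl)]
    rw [prodMat_add' (fun s => Matrix.diagonal (w ((t₁ : ℕ) + s)) * K)
      (fun s => Matrix.diagonal (w ((t₂ : ℕ) + s)) * K) (k₁ + 1) d₂
      (fun s _ => by
        show Matrix.diagonal (w ((t₂ : ℕ) + s)) * K
            = Matrix.diagonal (w ((t₁ : ℕ) + (k₁ + 1 + s))) * K
        rw [show (t₁ : ℕ) + (k₁ + 1 + s) = (t₂ : ℕ) + s from by omega])]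
    congr 1
    · refine prodMat_congr fun s hs => ?_
      show Matrix.diagonal (w s) * K = Matrix.diagonal (u s) * K
      have h1 : s ≠ (t₁ : ℕ) := by omega
      have h2 : s ≠ (t₂ : ℕ) := by omega
      have hws : w s = u s := by funext a; simp [hwdef, h1, h2]
      rw [hws]
    · congr 1
      rw [prodMat_cons' (fun s => Matrix.diagonal (w ((t₁ : ℕ) + s)) * K)
        (fun s => Matrix.diagonal (u ((t₁ : ℕ) + (s + 1))) * K)
        (Matrix.diagonal (fun x => if x = j then (1:ℝ) else 0) *
          (Matrix.diagonal (u (t₁ : ℕ)) * K)) k₁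
        (fun s hs => by
          show Matrix.diagonal (u ((t₁ : ℕ) + (s + 1))) * K
              = Matrix.diagonal (w ((t₁ : ℕ) + (s + 1))) * K
          have h1 : (t₁ : ℕ) + (s + 1) ≠ (t₁ : ℕ) := by omega
          have h2 : (t₁ : ℕ) + (s + 1) ≠ (t₂ : ℕ) := by omega
          have hws : w ((t₁ : ℕ) + (s + 1)) = u ((t₁ : ℕ) + (s + 1)) := by
            funext a; simp [hwdef, h1, h2]
          rw [hws])
        (by
          show Matrix.diagonal (fun x => if x = j then (1:ℝ) else 0) *
              (Matrix.diagonal (u (t₁ : ℕ)) * K) = Matrix.diagonal (w (t₁ : ℕ)) * K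
          rw [← Matrix.mul_assoc, Matrix.diagonal_mul_diagonal]
          have h2 : (t₁ : ℕ) ≠ (t₂ : ℕ) := by omega
          have hwt : (fun i => (if i = j then (1:ℝ) else 0) * u (t₁ : ℕ) i)
              = w (t₁ : ℕ) := by
            funext a
            simp [hwdef, h2]
          rw [hwt])]
      rw [prodMat_cons' (fun s => Matrix.diagonal (u ((t₁ : ℕ) + s)) * K)
        (fun s => Matrix.diagonal (u ((t₁ : ℕ) + (s + 1))) * K)
        (Matrix.diagonal (u (t₁ : ℕ)) * K) k₁ (fun s _ => rfl) rfl]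
      rw [Matrix.mul_assoc]
  cases d₂ with
  | zero =>
    rw [hsplit]
    rw [show prodMat (fun s => Matrix.diagonal (w ((t₂ : ℕ) + s)) * K) 0
        = (1 : Matrix (Fin n) (Fin n) ℝ) from rfl, Matrix.mul_one]
    have hTt : T = (t₂ : ℕ) := by omega
    have hT1 : T ≠ (t₁ : ℕ) := by omega
    have hφ : (fun b => w T b * (fun _ => (1:ℝ)) b)
        = (Matrix.diagonal (u T)).mulVec (fun b => if b = ℓ then (1:ℝ) else 0) := by
      rw [diag_mulVec]
      funext b
      simp only [hwdef]
      rw [if_neg hT1, if_pos hTt]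
      simp [mul_comm]
    rw [hφ, Matrix.mulVec_mulVec]
    rw [show (prodMat (fun s => Matrix.diagonal (u s) * K) (t₁ : ℕ) *
          (Matrix.diagonal (fun x => if x = j then (1:ℝ) else 0) *
            prodMat (fun s => Matrix.diagonal (u ((t₁ : ℕ) + s)) * K) (k₁ + 1))) *
          Matrix.diagonal (u T)
        = prodMat (fun s => Matrix.diagonal (u s) * K) (t₁ : ℕ) *
          (Matrix.diagonal (fun x => if x = j then (1:ℝ) else 0) *
            (prodMat (fun s => Matrix.diagonal (u ((t₁ : ℕ) + s)) * K) (k₁ + 1) *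
              Matrix.diagonal (u T)))
      from by simp only [Matrix.mul_assoc]]
    simp only [mulVec_delta', sand2]
    rw [← Finset.sum_mul, ← leftVec_eq K u (t₁ : ℕ) j]
    have hY : prodMat (fun s => Matrix.diagonal (u ((t₁ : ℕ) + s)) * K) (k₁ + 1) *
          Matrix.diagonal (u T)
        = midMat K u (t₁ : ℕ) ((t₂ : ℕ) - (t₁ : ℕ)) := by
      rw [show (t₂ : ℕ) - (t₁ : ℕ) = k₁ + 1 from by omega, midMat_eq K u (t₁ : ℕ) (k₁ + 1),
        show (t₁ : ℕ) + (k₁ + 1) = T from by omega]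
    rw [hY]
    have hrz : rightAux K u T (T - (t₂ : ℕ)) ℓ = 1 := by
      rw [show T - (t₂ : ℕ) = 0 from by omega]
      simp [rightAux]
    rw [hrz]
    ring
  | succ k₂ =>
    rw [hsplit]
    have hT1 : T ≠ (t₁ : ℕ) := by omega
    have hT2 : T ≠ (t₂ : ℕ) := by omega
    have hφ : (fun b => w T b * (fun _ => (1:ℝ)) b) = u T := by
      funext b
      simp only [hwdef]
      rw [if_neg hT1, if_neg hT2]
      simp
    rw [hφ]
    have hC : prodMat (fun s => Matrix.diagonal (w ((t₂ : ℕ) + s)) * K) (k₂ + 1)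
        = (Matrix.diagonal (fun x => if x = ℓ then (1:ℝ) else 0) *
            (Matrix.diagonal (u (t₂ : ℕ)) * K)) *
          prodMat (fun s => Matrix.diagonal (u ((t₂ : ℕ) + (s + 1))) * K) k₂ := by
      rw [prodMat_cons' (fun s => Matrix.diagonal (w ((t₂ : ℕ) + s)) * K)
        (fun s => Matrix.diagonal (u ((t₂ : ℕ) + (s + 1))) * K)
        (Matrix.diagonal (fun x => if x = ℓ then (1:ℝ) else 0) *
          (Matrix.diagonal (u (t₂ : ℕ)) * K)) k₂
        (fun s _ => by
          show Matrix.diagonal (u ((t₂ : ℕ) + (s + 1))) * K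
              = Matrix.diagonal (w ((t₂ : ℕ) + (s + 1))) * K
          have h1 : (t₂ : ℕ) + (s + 1) ≠ (t₁ : ℕ) := by omega
          have h2 : (t₂ : ℕ) + (s + 1) ≠ (t₂ : ℕ) := by omega
          have hws : w ((t₂ : ℕ) + (s + 1)) = u ((t₂ : ℕ) + (s + 1)) := by
            funext a; simp [hwdef, h1, h2]
          rw [hws])
        (by
          show Matrix.diagonal (fun x => if x = ℓ then (1:ℝ) else 0) *
              (Matrix.diagonal (u (t₂ : ℕ)) * K) = Matrix.diagonal (w (t₂ : ℕ)) * K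
          rw [← Matrix.mul_assoc, Matrix.diagonal_mul_diagonal]
          have h1 : (t₂ : ℕ) ≠ (t₁ : ℕ) := by omega
          have hwt : (fun i => (if i = ℓ then (1:ℝ) else 0) * u (t₂ : ℕ) i)
              = w (t₂ : ℕ) := by
            funext a
            simp [hwdef, h1]
          rw [hwt])]
    rw [hC]
    have hswap : Matrix.diagonal (fun x => if x = ℓ then (1:ℝ) else 0) *
          Matrix.diagonal (u (t₂ : ℕ))
        = Matrix.diagonal (u (t₂ : ℕ)) *
          Matrix.diagonal (fun x => if x = ℓ then (1:ℝ) else 0) := by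
      have hcomm : (fun i => (if i = ℓ then (1:ℝ) else 0) * u (t₂ : ℕ) i)
          = (fun i => u (t₂ : ℕ) i * if i = ℓ then (1:ℝ) else 0) := by
        funext a
        ring
      rw [Matrix.diagonal_mul_diagonal, Matrix.diagonal_mul_diagonal, hcomm]
    have hXX : prodMat (fun s => Matrix.diagonal (u s) * K) (t₁ : ℕ) *
          ((Matrix.diagonal (fun x => if x = j then (1:ℝ) else 0) *
              prodMat (fun s => Matrix.diagonal (u ((t₁ : ℕ) + s)) * K) (k₁ + 1)) *
            ((Matrix.diagonal (fun x => if x = ℓ then (1:ℝ) else 0) *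
                (Matrix.diagonal (u (t₂ : ℕ)) * K)) *
              prodMat (fun s => Matrix.diagonal (u ((t₂ : ℕ) + (s + 1))) * K) k₂))
        = prodMat (fun s => Matrix.diagonal (u s) * K) (t₁ : ℕ) *
          (Matrix.diagonal (fun x => if x = j then (1:ℝ) else 0) *
            ((prodMat (fun s => Matrix.diagonal (u ((t₁ : ℕ) + s)) * K) (k₁ + 1) *
                Matrix.diagonal (u (t₂ : ℕ))) *
              (Matrix.diagonal (fun x => if x = ℓ then (1:ℝ) else 0) *
                (K * prodMat (fun s => Matrix.diagonal (u ((t₂ : ℕ) + (s + 1))) * K) k₂)))) := by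
      simp only [Matrix.mul_assoc]
      rw [← Matrix.mul_assoc (Matrix.diagonal fun x => if x = ℓ then (1:ℝ) else 0)
        (Matrix.diagonal (u (t₂ : ℕ))), hswap]
      simp only [Matrix.mul_assoc]
    rw [hXX]
    have hmid : prodMat (fun s => Matrix.diagonal (u ((t₁ : ℕ) + s)) * K) (k₁ + 1) *
          Matrix.diagonal (u (t₂ : ℕ))
        = midMat K u (t₁ : ℕ) ((t₂ : ℕ) - (t₁ : ℕ)) := by
      rw [show (t₂ : ℕ) - (t₁ : ℕ) = k₁ + 1 from by omega, midMat_eq K u (t₁ : ℕ) (k₁ + 1),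
        show (t₁ : ℕ) + (k₁ + 1) = (t₂ : ℕ) from by omega]
    have hright : (∑ b, (K * prodMat (fun s => Matrix.diagonal (u ((t₂ : ℕ) + (s + 1))) * K) k₂)
            ℓ b * u T b)
        = rightAux K u T (T - (t₂ : ℕ)) ℓ := by
      rw [show T - (t₂ : ℕ) = k₂ + 1 from by omega]
      rw [rightAux_eq K u T (k₂ + 1) (by omega)]
      have e2 : (fun s => K * Matrix.diagonal (u (T - (k₂ + 1) + s + 1)))
          = (fun s => K * Matrix.diagonal (u ((t₂ : ℕ) + (s + 1)))) := by
        funext s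
        rw [show T - (k₂ + 1) + s + 1 = (t₂ : ℕ) + (s + 1) from by omega]
      rw [e2]
      rw [show prodMat (fun s => K * Matrix.diagonal (u ((t₂ : ℕ) + (s + 1)))) (k₂ + 1)
          = prodMat (fun s => K * Matrix.diagonal (u ((t₂ : ℕ) + (s + 1)))) k₂ *
            (K * Matrix.diagonal (u ((t₂ : ℕ) + (k₂ + 1)))) from rfl]
      rw [show (t₂ : ℕ) + (k₂ + 1) = T from by omega]
      rw [← Matrix.mulVec_mulVec, ← Matrix.mulVec_mulVec, diag_mulVec]
      have hx : (fun b => u T b * (fun _ => (1:ℝ)) b) = u T := by funext b; simp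
      rw [hx, Matrix.mulVec_mulVec, ← shuttle]
      simp [mulVec_apply]
    simp only [mulVec_apply, sand2]
    trans ((∑ a, prodMat (fun s => Matrix.diagonal (u s) * K) (t₁ : ℕ) a j) *
      (((prodMat (fun s => Matrix.diagonal (u ((t₁ : ℕ) + s)) * K) (k₁ + 1) *
          Matrix.diagonal (u (t₂ : ℕ))) j ℓ) *
        (∑ b, (K * prodMat (fun s => Matrix.diagonal (u ((t₂ : ℕ) + (s + 1))) * K) k₂) ℓ b *
          u T b)))
    · rw [Finset.sum_mul]
      refine Finset.sum_congr rfl fun a _ => ?_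
      rw [Finset.mul_sum, Finset.mul_sum]
      exact Finset.sum_congr rfl fun b _ => by ring
    · rw [← leftVec_eq K u (t₁ : ℕ) j, hmid, hright]
      ring
end

section
/- Let J ≥ 1, K ∈ ℝⁿˣⁿ, K̂ the tensor with entries K̂_{i₀,…,i_J} = Π_{ℓ=1}^{J} K_{i₀, i_ℓ}, and U = u₀ ⊗ ⋯ ⊗ u_J. Then for each j ∈ {1,…,J}, the projection onto the j-th marginal satisfies P_j(K̂ ⊙ U) = u_j ⊙ Kᵀ ( u₀ ⊙ ∏_{ℓ≠j, ℓ≥1} (K u_ℓ) ), where the product over ℓ is the entrywise product of the vectors K u_ℓ. -/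
open Matrix

/-- projection onto the `j`-th non-central marginal (`1 ≤ j ≤ J`) of the
barycenter tensor `K̂ ⊙ U` equals `u_j ⊙ Kᵀ(u₀ ⊙ ∏_{ℓ≠j} (K u_ℓ))`. -/
theorem stmt8 {n J : ℕ} (hJ : 1 ≤ J) (K : Matrix (Fin n) (Fin n) ℝ)
    (u : Fin (J + 1) → Fin n → ℝ) (j : Fin J) (a : Fin n) :
    (∑ i : Fin (J + 1) → Fin n,
        if i j.succ = a then
          (∏ l : Fin J, K (i 0) (i l.succ)) * ∏ s : Fin (J + 1), u s (i s)
        else 0)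
      = u j.succ a *
          Kᵀ.mulVec (fun b => u 0 b * ∏ l ∈ Finset.univ.erase j, K.mulVec (u l.succ) b) a := by
  classical
  -- define the per-coordinate factor
  set g : Fin n → Fin J → Fin n → ℝ := fun b l c =>
    if l = j then (if c = a then K b c * u l.succ c else 0) else K b c * u l.succ c with hg
  have step1 : (∑ i : Fin (J + 1) → Fin n,
        if i j.succ = a then
          (∏ l : Fin J, K (i 0) (i l.succ)) * ∏ s : Fin (J + 1), u s (i s)
        else 0)
      = ∑ b : Fin n, ∑ i' : Fin J → Fin n, u 0 b * ∏ l : Fin J, g b l (i' l) := by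
    rw [← (Fin.consEquiv (fun _ : Fin (J+1) => Fin n)).sum_comp, Fintype.sum_prod_type]
    refine Finset.sum_congr rfl fun b _ => Finset.sum_congr rfl fun i' _ => ?_
    simp only [Fin.consEquiv_apply, Fin.cons_zero, Fin.cons_succ, Fin.prod_univ_succ]
    by_cases h : i' j = a
    · rw [if_pos h]
      rw [show (∏ l : Fin J, g b l (i' l)) = ∏ l : Fin J, K b (i' l) * u l.succ (i' l) from
        Finset.prod_congr rfl fun l _ => by
          by_cases hl : l = j
          · subst hl; simp [hg, h]
          · simp [hg, hl]]
      rw [Finset.prod_mul_distrib]; ring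
    · rw [if_neg h]
      have : g b j (i' j) = 0 := by simp [hg, h]
      rw [Finset.prod_eq_zero (Finset.mem_univ j) this, mul_zero]
  rw [step1]
  have step2 : ∀ b : Fin n, (∑ i' : Fin J → Fin n, u 0 b * ∏ l : Fin J, g b l (i' l))
      = u 0 b * ((K b a * u j.succ a) * ∏ l ∈ Finset.univ.erase j, ∑ c, K b c * u l.succ c) := by
    intro b
    rw [← Finset.mul_sum, ← Fintype.prod_sum (fun l c => g b l c)]
    congr 1
    rw [← Finset.mul_prod_erase _ _ (Finset.mem_univ j)]
    congr 1
    · simp [hg]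
    · refine Finset.prod_congr rfl fun l hl => Finset.sum_congr rfl fun c _ => ?_
      simp [hg, (Finset.mem_erase.mp hl).1]
  simp only [step2]
  simp only [Matrix.mulVec, dotProduct, transpose_apply, Finset.mul_sum]
  refine Finset.sum_congr rfl fun b _ => ?_
  ring
end

section
/- Let J ≥ 1, K ∈ ℝⁿˣⁿ, K̂ the tensor with entries K̂_{i₀,…,i_J} = Π_{ℓ=1}^{J} K_{i₀,i_ℓ}, and U = u₀ ⊗ ⋯ ⊗ u_J. Then for distinct j₁, j₂ ∈ {1,…,J}, the bi-marginal projection satisfies P_{j₁,j₂}(K̂ ⊙ U) = diag(u_{j₁}) Kᵀ diag( u₀ ⊙ ∏_{ℓ∉{j₁,j₂}, ℓ≥1} (K u_ℓ) ) K diag(u_{j₂}). -/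
open Matrix

lemma sum_constrained_prod {n J : ℕ} (F : Fin J → Fin n → ℝ)
    (j₁ j₂ : Fin J) (hj : j₁ ≠ j₂) (a b : Fin n) :
    (∑ g : Fin J → Fin n, if g j₁ = a ∧ g j₂ = b then ∏ l, F l (g l) else 0)
      = F j₁ a * F j₂ b * ∏ l ∈ (Finset.univ.erase j₁).erase j₂, ∑ x, F l x := by
  classical
  set G : Fin J → Fin n → ℝ := fun l x =>
    if l = j₁ then (if x = a then F l x else 0)
    else if l = j₂ then (if x = b then F l x else 0) else F l x with hG
  have h1 : ∀ g : Fin J → Fin n,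
      (if g j₁ = a ∧ g j₂ = b then ∏ l, F l (g l) else 0) = ∏ l, G l (g l) := by
    intro g
    by_cases h : g j₁ = a ∧ g j₂ = b
    · rw [if_pos h]
      refine Finset.prod_congr rfl fun l _ => ?_
      simp only [hG]
      by_cases hl1 : l = j₁
      · subst hl1; simp [h.1]
      · by_cases hl2 : l = j₂
        · subst hl2; simp [h.2, hl1]
        · simp [hl1, hl2]
    · rw [if_neg h]
      rcases not_and_or.mp h with h' | h'
      · refine (Finset.prod_eq_zero (Finset.mem_univ j₁) ?_).symm
        simp [hG, h']
      · refine (Finset.prod_eq_zero (Finset.mem_univ j₂) ?_).symm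
        simp [hG, h', Ne.symm hj]
  simp_rw [h1]
  rw [← Fintype.prod_sum G]
  rw [← Finset.mul_prod_erase _ _ (Finset.mem_univ j₁),
    ← Finset.mul_prod_erase _ _
      (Finset.mem_erase.mpr ⟨Ne.symm hj, Finset.mem_univ j₂⟩)]
  have hj₁ : (∑ x, G j₁ x) = F j₁ a := by
    simp [hG]
  have hj₂ : (∑ x, G j₂ x) = F j₂ b := by
    simp [hG, Ne.symm hj]
  rw [hj₁, hj₂, ← mul_assoc]
  congr 1
  refine Finset.prod_congr rfl fun l hl => ?_
  rw [Finset.mem_erase, Finset.mem_erase] at hl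
  refine Finset.sum_congr rfl fun x _ => ?_
  simp [hG, hl.1, hl.2.1]

/-- bi-marginal projection of the barycenter tensor `K̂ ⊙ U` onto two distinct
non-central marginals `j₁ ≠ j₂` equals
`diag(u_{j₁}) Kᵀ diag(u₀ ⊙ ∏_{ℓ∉{j₁,j₂}} (K u_ℓ)) K diag(u_{j₂})`. -/
theorem stmt9 {n J : ℕ} (hJ : 1 ≤ J) (K : Matrix (Fin n) (Fin n) ℝ)
    (u : Fin (J + 1) → Fin n → ℝ) (j₁ j₂ : Fin J) (hj : j₁ ≠ j₂) (a b : Fin n) :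
    (∑ i : Fin (J + 1) → Fin n,
        if i j₁.succ = a ∧ i j₂.succ = b then
          (∏ l : Fin J, K (i 0) (i l.succ)) * ∏ s : Fin (J + 1), u s (i s)
        else 0)
      = u j₁.succ a *
          (Kᵀ * Matrix.diagonal
              (fun c => u 0 c * ∏ l ∈ (Finset.univ.erase j₁).erase j₂, K.mulVec (u l.succ) c)
            * K) a b * u j₂.succ b := by
  classical
  rw [← (Fin.consEquiv (fun _ : Fin (J+1) => Fin n)).sum_comp]
  simp only [Fin.consEquiv_apply]
  rw [Fintype.sum_prod_type]
  have key : ∀ c : Fin n,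
      (∑ g : Fin J → Fin n,
          if (Fin.cons c g : ∀ _ : Fin (J+1), Fin n) j₁.succ = a ∧
              (Fin.cons c g : ∀ _ : Fin (J+1), Fin n) j₂.succ = b then
            (∏ l : Fin J, K ((Fin.cons c g : ∀ _ : Fin (J+1), Fin n) 0)
                ((Fin.cons c g : ∀ _ : Fin (J+1), Fin n) l.succ)) *
              ∏ s : Fin (J + 1), u s ((Fin.cons c g : ∀ _ : Fin (J+1), Fin n) s)
          else 0)
        = u 0 c * ((K c a * u j₁.succ a) * (K c b * u j₂.succ b) *
            ∏ l ∈ (Finset.univ.erase j₁).erase j₂, ∑ x, K c x * u l.succ x) := by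
    intro c
    have : ∀ g : Fin J → Fin n,
        (if (Fin.cons c g : ∀ _ : Fin (J+1), Fin n) j₁.succ = a ∧
              (Fin.cons c g : ∀ _ : Fin (J+1), Fin n) j₂.succ = b then
            (∏ l : Fin J, K ((Fin.cons c g : ∀ _ : Fin (J+1), Fin n) 0)
                ((Fin.cons c g : ∀ _ : Fin (J+1), Fin n) l.succ)) *
              ∏ s : Fin (J + 1), u s ((Fin.cons c g : ∀ _ : Fin (J+1), Fin n) s)
          else 0)
        = u 0 c * (if g j₁ = a ∧ g j₂ = b
            then ∏ l : Fin J, K c (g l) * u l.succ (g l) else 0) := by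
      intro g
      simp only [Fin.cons_succ, Fin.cons_zero, Fin.prod_univ_succ, Finset.prod_mul_distrib]
      split <;> ring
    simp_rw [this, ← Finset.mul_sum,
      sum_constrained_prod (fun l x => K c x * u l.succ x) j₁ j₂ hj a b]
  simp_rw [key]
  simp only [Matrix.mul_apply, Matrix.diagonal_apply, Matrix.transpose_apply,
    Matrix.mulVec, dotProduct]
  simp only [mul_ite, mul_zero, Finset.sum_ite_eq', Finset.mem_univ, if_true]
  rw [Finset.mul_sum, Finset.sum_mul]
  refine Finset.sum_congr rfl fun c _ => ?_
  ring
end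

section
/- With the setup of the dual objective g(λ₀,…,λ_T) = −ε ⟨K̂, U(λ)⟩ − Σ_t ‖λ_t‖²/(4γ_t) + Σ_t λ_tᵀ r_t, where u_t = exp(G_tᵀ λ_t/ε) and U = u₀ ⊗ ⋯ ⊗ u_T, the gradient of g with respect to λ_t equals −G_t (v_t ⊙ u_t) − λ_t/(2γ_t) + r_t, where v_t = P_t(K̂ ⊙ U) ./ u_t is the entrywise quotient of the t-th marginal projection by u_t. -/
/-!
With every block but `λ_t` fixed, the dual objective is, up to an additive constant,
`μ ↦ -ε ∑_i c_i exp(⟪a_i, μ⟫ / ε) - ‖μ‖² / (4γ_t) + ⟪r_t, μ⟫`, where `a_i` is the column of `G_t`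
indexed by `i_t` and `c_i` is `(K̂ ⊙ U)_i` evaluated at `λ_t = 0`. Its gradient is
`-∑_i (K̂ ⊙ U)_i a_i - μ / (2γ_t) + r_t`, and grouping the atoms `i` by their `t`-th coordinate
turns the sum into `G_t` applied to the marginal `P_t(K̂ ⊙ U) = v_t ⊙ u_t`.
-/

open Finset Function Matrix WithLp
open scoped RealInnerProductSpace

section Gradient

variable {F : Type*} [NormedAddCommGroup F] [InnerProductSpace ℝ F] [CompleteSpace F]
  {f g : F → ℝ} {f' g' x : F}

theorem HasGradientAt.add (hf : HasGradientAt f f' x) (hg : HasGradientAt g g' x) :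
    HasGradientAt (fun y => f y + g y) (f' + g') x := by
  rw [hasGradientAt_iff_hasFDerivAt, map_add]
  exact hf.hasFDerivAt.add hg.hasFDerivAt

theorem HasGradientAt.sub (hf : HasGradientAt f f' x) (hg : HasGradientAt g g' x) :
    HasGradientAt (fun y => f y - g y) (f' - g') x := by
  rw [hasGradientAt_iff_hasFDerivAt, map_sub]
  exact hf.hasFDerivAt.sub hg.hasFDerivAt

theorem HasGradientAt.const_mul (hf : HasGradientAt f f' x) (c : ℝ) :
    HasGradientAt (fun y => c * f y) (c • f') x := by
  rw [hasGradientAt_iff_hasFDerivAt, map_smul]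
  exact hf.hasFDerivAt.const_mul c

theorem HasGradientAt.div_const (hf : HasGradientAt f f' x) (c : ℝ) :
    HasGradientAt (fun y => f y / c) (c⁻¹ • f') x := by
  simpa only [div_eq_inv_mul] using hf.const_mul c⁻¹

theorem HasGradientAt.add_const (hf : HasGradientAt f f' x) (c : ℝ) :
    HasGradientAt (fun y => f y + c) f' x :=
  hf.hasFDerivAt.add_const c

theorem HasGradientAt.exp (hf : HasGradientAt f f' x) :
    HasGradientAt (fun y => Real.exp (f y)) (Real.exp (f x) • f') x := by
  rw [hasGradientAt_iff_hasFDerivAt, map_smul]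
  exact hf.hasFDerivAt.exp

theorem HasGradientAt.fun_sum {ι : Type*} {u : Finset ι} {f : ι → F → ℝ} {f' : ι → F}
    (hf : ∀ i ∈ u, HasGradientAt (f i) (f' i) x) :
    HasGradientAt (fun y => ∑ i ∈ u, f i y) (∑ i ∈ u, f' i) x := by
  rw [hasGradientAt_iff_hasFDerivAt, map_sum]
  exact HasFDerivAt.fun_sum fun i hi => (hf i hi).hasFDerivAt

theorem hasGradientAt_inner_const_left (a : F) : HasGradientAt (fun y => ⟪a, y⟫) a x :=
  (innerSL ℝ a).hasFDerivAt

theorem hasGradientAt_norm_sq (x : F) : HasGradientAt (fun y => ‖y‖ ^ 2) ((2 : ℝ) • x) x := by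
  rw [hasGradientAt_iff_hasFDerivAt, two_smul, map_add, ← two_smul ℕ]
  exact (hasStrictFDerivAt_norm_sq x).hasFDerivAt

end Gradient

@[to_additive]
theorem Fintype.prod_apply_update {ι M : Type*} [Fintype ι] [DecidableEq ι] [CommMonoid M]
    {α : ι → Type*} (f : ∀ i, α i → M) (g : ∀ i, α i) (t : ι) (b : α t) :
    ∏ s, f s (update g t b s) = f t b * ∏ s ∈ univ \ {t}, f s (g s) := by
  simp_rw [apply_update f]
  exact prod_update_of_mem (mem_univ t) _ _

theorem Matrix.mulVec_ofLp_apply {m κ : Type*} [Fintype κ] (A : Matrix m κ ℝ)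
    (v : EuclideanSpace ℝ κ) (j : m) : (A *ᵥ ofLp v) j = ⟪toLp 2 (A j), v⟫ := by
  simp [EuclideanSpace.inner_eq_star_dotProduct, mulVec, dotProduct_comm]

/-- The marginal projection `P_t`. -/
def marginal {σ κ : Type*} [Fintype σ] [DecidableEq σ] [Fintype κ] [DecidableEq κ] (t : σ)
    (W : (σ → κ) → ℝ) : κ → ℝ :=
  fun j => ∑ i, if i t = j then W i else 0

theorem Matrix.mulVec_marginal_apply {σ κ m : Type*} [Fintype σ] [DecidableEq σ] [Fintype κ]
    [DecidableEq κ] (M : Matrix m κ ℝ) (t : σ) (W : (σ → κ) → ℝ) (k : m) :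
    (M *ᵥ marginal t W) k = ∑ i, W i * M k (i t) := by
  simp only [mulVec, dotProduct, marginal, mul_sum, mul_ite, mul_zero]
  rw [sum_comm]
  simp [mul_comm]

section DualObjective

variable {σ κ : Type*} [Fintype σ] [DecidableEq σ] {m : σ → ℕ}
  (Khat : (σ → κ) → ℝ) (G : ∀ s, Matrix (Fin (m s)) κ ℝ) (r : ∀ s, Fin (m s) → ℝ) (ε : ℝ)
  (γ : σ → ℝ)

/-- `(K̂ ⊙ U(l))_i`. -/
noncomputable def scaledKernel (l : ∀ s, Fin (m s) → ℝ) (i : σ → κ) : ℝ :=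
  Khat i * ∏ s, Real.exp (((G s)ᵀ *ᵥ l s) (i s) / ε)

noncomputable def dualObjective [Fintype κ] (l : ∀ s, Fin (m s) → ℝ) : ℝ :=
  -ε * ∑ i, scaledKernel Khat G ε l i - ∑ s, (∑ k, l s k ^ 2) / (4 * γ s)
    + ∑ s, ∑ k, l s k * r s k

theorem scaledKernel_update (l : ∀ s, Fin (m s) → ℝ) (t : σ) (μ : EuclideanSpace ℝ (Fin (m t)))
    (i : σ → κ) :
    scaledKernel Khat G ε (update l t (ofLp μ)) i =
      scaledKernel Khat G ε (update l t 0) i * Real.exp (⟪toLp 2 ((G t)ᵀ (i t)), μ⟫ / ε) := by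
  simp only [scaledKernel,
    Fintype.prod_apply_update (fun s v => Real.exp (((G s)ᵀ *ᵥ v) (i s) / ε)),
    mulVec_zero, Pi.zero_apply, zero_div, Real.exp_zero, one_mul, mulVec_ofLp_apply]
  ring

theorem dualObjective_update [Fintype κ] (l : ∀ s, Fin (m s) → ℝ) (t : σ) :
    ∃ C, ∀ μ : EuclideanSpace ℝ (Fin (m t)), dualObjective Khat G r ε γ (update l t (ofLp μ)) =
      -ε * ∑ i, scaledKernel Khat G ε (update l t 0) i * Real.exp (⟪toLp 2 ((G t)ᵀ (i t)), μ⟫ / ε)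
        - ‖μ‖ ^ 2 / (4 * γ t) + ⟪toLp 2 (r t), μ⟫ + C := by
  refine ⟨∑ s ∈ univ \ {t}, ∑ k, l s k * r s k - ∑ s ∈ univ \ {t}, (∑ k, l s k ^ 2) / (4 * γ s),
    fun μ => ?_⟩
  simp only [dualObjective, scaledKernel_update,
    Fintype.sum_apply_update (fun s (v : Fin (m s) → ℝ) => (∑ k, v k ^ 2) / (4 * γ s)),
    Fintype.sum_apply_update (fun s (v : Fin (m s) → ℝ) => ∑ k, v k * r s k),
    EuclideanSpace.real_norm_sq_eq, PiLp.inner_apply, RCLike.inner_apply, conj_trivial]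
  ring

theorem hasGradientAt_dualObjective_update [Fintype κ] (hε : ε ≠ 0) (l : ∀ s, Fin (m s) → ℝ)
    (t : σ) (x : EuclideanSpace ℝ (Fin (m t))) :
    HasGradientAt (fun μ : EuclideanSpace ℝ (Fin (m t)) =>
        dualObjective Khat G r ε γ (update l t (ofLp μ)))
      (-∑ i, scaledKernel Khat G ε (update l t (ofLp x)) i • toLp 2 ((G t)ᵀ (i t))
        - (2 * γ t)⁻¹ • x + toLp 2 (r t)) x := by
  obtain ⟨C, hC⟩ := dualObjective_update Khat G r ε γ l t
  have hexp := HasGradientAt.fun_sum (u := univ) fun i _ =>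
    (((hasGradientAt_inner_const_left (x := x) (toLp 2 ((G t)ᵀ (i t)))).div_const ε).exp).const_mul
      (scaledKernel Khat G ε (update l t 0) i)
  convert (((hexp.const_mul (-ε)).sub ((hasGradientAt_norm_sq x).div_const (4 * γ t))).add
    (hasGradientAt_inner_const_left (toLp 2 (r t)))).add_const C using 1
  · exact funext hC
  · simp only [scaledKernel_update, smul_sum, smul_smul]
    rw [← sum_neg_distrib, show (4 * γ t)⁻¹ * 2 = (2 * γ t)⁻¹ by ring]
    congr 3 with i
    rw [← neg_smul]
    field_simp

end DualObjective

theorem stmt17_general {n T : ℕ} (Khat : (Fin (T + 1) → Fin n) → ℝ)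
    (m : Fin (T + 1) → ℕ) (G : ∀ s, Matrix (Fin (m s)) (Fin n) ℝ)
    (r : ∀ s, Fin (m s) → ℝ) (ε : ℝ) (hε : 0 < ε)
    (γ : Fin (T + 1) → ℝ)
    (lam : (s : Fin (T + 1)) → Fin (m s) → ℝ) (t : Fin (T + 1)) :
    HasGradientAt
      (fun μ : EuclideanSpace ℝ (Fin (m t)) =>
        (fun l : (s : Fin (T + 1)) → Fin (m s) → ℝ =>
            -ε * (∑ i : Fin (T + 1) → Fin n,
                Khat i * ∏ s, Real.exp ((G s)ᵀ.mulVec (l s) (i s) / ε))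
              - (∑ s, (∑ k, (l s k) ^ 2) / (4 * γ s))
              + ∑ s, ∑ k, l s k * r s k)
          (Function.update lam t (fun k => μ k)))
      ((WithLp.equiv 2 (Fin (m t) → ℝ)).symm
        (fun k =>
          -(G t).mulVec
              (fun j =>
                ((∑ i : Fin (T + 1) → Fin n,
                    if i t = j then
                      Khat i * ∏ s, Real.exp ((G s)ᵀ.mulVec (lam s) (i s) / ε)
                    else 0)
                  / Real.exp ((G t)ᵀ.mulVec (lam t) j / ε))
                * Real.exp ((G t)ᵀ.mulVec (lam t) j / ε)) k
            - lam t k / (2 * γ t) + r t k))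
      ((WithLp.equiv 2 (Fin (m t) → ℝ)).symm (lam t)) := by
  have h := hasGradientAt_dualObjective_update Khat G r ε γ hε.ne' lam t (toLp 2 (lam t))
  rw [ofLp_toLp, update_eq_self] at h
  show HasGradientAt (fun μ => dualObjective Khat G r ε γ (update lam t (ofLp μ))) _
    (toLp 2 (lam t))
  convert h using 1
  ext k
  simp only [WithLp.equiv_symm_apply, PiLp.toLp_apply, div_mul_cancel₀ _ (Real.exp_ne_zero _)]
  change -(G t *ᵥ marginal t (scaledKernel Khat G ε lam)) k - _ + _ = _
  simp [mulVec_marginal_apply, div_eq_inv_mul]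

/-- the gradient of the dual objective
`g(λ) = −ε ⟨Khat, U(λ)⟩ − ∑_s ‖λ_s‖²/(4γ_s) + ∑_s λ_sᵀ r_s` with respect to the block `λ_t`
(other blocks held fixed) equals `−G_t (v_t ⊙ u_t) − λ_t/(2γ_t) + r_t`, where
`u_s = exp(G_sᵀ λ_s / ε)` entrywise and `v_t = P_t(Khat ⊙ U) ./ u_t`. -/
theorem stmt17 {n T : ℕ} (Khat : (Fin (T + 1) → Fin n) → ℝ)
    (m : Fin (T + 1) → ℕ) (G : ∀ s, Matrix (Fin (m s)) (Fin n) ℝ)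
    (r : ∀ s, Fin (m s) → ℝ) (ε : ℝ) (hε : 0 < ε)
    (γ : Fin (T + 1) → ℝ) (hγ : ∀ s, 0 < γ s)
    (lam : (s : Fin (T + 1)) → Fin (m s) → ℝ) (t : Fin (T + 1)) :
    HasGradientAt
      (fun μ : EuclideanSpace ℝ (Fin (m t)) =>
        (fun l : (s : Fin (T + 1)) → Fin (m s) → ℝ =>
            -ε * (∑ i : Fin (T + 1) → Fin n,
                Khat i * ∏ s, Real.exp ((G s)ᵀ.mulVec (l s) (i s) / ε))
              - (∑ s, (∑ k, (l s k) ^ 2) / (4 * γ s))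
              + ∑ s, ∑ k, l s k * r s k)
          (Function.update lam t (fun k => μ k)))
      ((WithLp.equiv 2 (Fin (m t) → ℝ)).symm
        (fun k =>
          -(G t).mulVec
              (fun j =>
                ((∑ i : Fin (T + 1) → Fin n,
                    if i t = j then
                      Khat i * ∏ s, Real.exp ((G s)ᵀ.mulVec (lam s) (i s) / ε)
                    else 0)
                  / Real.exp ((G t)ᵀ.mulVec (lam t) j / ε))
                * Real.exp ((G t)ᵀ.mulVec (lam t) j / ε)) k
            - lam t k / (2 * γ t) + r t k))
      ((WithLp.equiv 2 (Fin (m t) → ℝ)).symm (lam t)) :=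
  stmt17_general Khat m G r ε hε γ lam t
end
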